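/- Fix 0 < q < 1. On ℓ²(ℕ × ℕ) define a and b as in the representation σ. Then a* b = b a* as bounded operators. -/

import Mathlib

/-!
`a` is a weighted backward shift in the first index, so its adjoint is the weighted forward shift
`a* |m,n⟩ = (1-q^{2m+2})^{1/2} q^{m+1+2n} |m+1,n⟩`. Hence both `a* b` and `b a*` send `|m,n⟩` to
`(1-q^{2m+2})^{1/2} (1-q^{4n+4})^{1/2} q^{3m+4n+7} |m+1,n+1⟩`, and two bounded operators that agree on
an orthonormal basis are equal.
-/

noncomputable section

/-- The Hilbert space ℓ²(ℕ × ℕ). -/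
abbrev H2 : Type := lp (fun _ : ℕ × ℕ => ℂ) 2

/-- The standard orthonormal basis vector `|m,n⟩` of ℓ²(ℕ × ℕ). -/
def ket (m n : ℕ) : H2 := lp.single 2 (m, n) (1 : ℂ)

namespace HilbertBasis

open ContinuousLinearMap Function

variable {ι 𝕜 E : Type*} [RCLike 𝕜] [NormedAddCommGroup E] [InnerProductSpace 𝕜 E]
  (b : HilbertBasis ι 𝕜 E)

theorem ext_continuousLinearMap {F : Type*} [AddCommMonoid F] [Module 𝕜 F] [TopologicalSpace F]
    [T2Space F] {T S : E →L[𝕜] F} (h : ∀ i, T (b i) = S (b i)) : T = S :=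
  ContinuousLinearMap.ext_on (Submodule.dense_iff_topologicalClosure_eq_top.mpr b.dense_span)
    (by rintro _ ⟨i, rfl⟩; exact h i)

theorem ext_inner_left {x y : E} (h : ∀ i, inner 𝕜 (b i) x = inner 𝕜 (b i) y) : x = y :=
  b.repr.injective <| lp.ext <| funext fun i => by simp only [b.repr_apply_apply, h]

theorem adjoint_apply_of_weightedShift [CompleteSpace E] {s : ι → ι} (hs : Injective s)
    (w : ι → 𝕜) {T : E →L[𝕜] E} (hT : ∀ i, T (b (s i)) = w i • b i)
    (hT0 : ∀ j ∉ Set.range s, T (b j) = 0) (i : ι) :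
    adjoint T (b i) = starRingEnd 𝕜 (w i) • b (s i) := by
  classical
  have hb := orthonormal_iff_ite.mp b.orthonormal
  refine b.ext_inner_left fun j => ?_
  rw [adjoint_inner_right, inner_smul_right]
  by_cases hj : j ∈ Set.range s
  · obtain ⟨k, rfl⟩ := hj
    rw [hT, inner_smul_left, hb, hb]
    by_cases hki : k = i
    · simp [hki]
    · simp [hki, hs.ne hki]
  · have hji : j ≠ s i := fun h => hj ⟨i, h.symm⟩
    rw [hT0 j hj, inner_zero_left, hb, if_neg hji, mul_zero]

end HilbertBasis

def ketBasis : HilbertBasis (ℕ × ℕ) ℂ H2 := default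

theorem ketBasis_apply (m n : ℕ) : ketBasis (m, n) = ket m n := by
  classical
  rw [← HilbertBasis.repr_symm_single]
  rfl

open ContinuousLinearMap in
theorem stmt16_general (q : ℝ)
    (a b : H2 →L[ℂ] H2)
    (ha0 : ∀ n : ℕ, a (ket 0 n) = 0)
    (ha : ∀ m n : ℕ, a (ket (m + 1) n)
        = ((Real.sqrt (1 - q ^ (2 * (m + 1))) * q ^ ((m + 1) + 2 * n) : ℝ) : ℂ) • ket m n)
    (hb : ∀ m n : ℕ, b (ket m n)
        = ((Real.sqrt (1 - q ^ (4 * n + 4)) * q ^ (2 * (m + n + 2)) : ℝ) : ℂ) • ket m (n + 1)) :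
    adjoint a * b = b * adjoint a := by
  have hshift : Function.Injective fun i : ℕ × ℕ => (i.1 + 1, i.2) := fun i j h => by
    simpa [Prod.ext_iff] using h
  have hadj (m n : ℕ) : adjoint a (ket m n)
      = ((Real.sqrt (1 - q ^ (2 * (m + 1))) * q ^ ((m + 1) + 2 * n) : ℝ) : ℂ) • ket (m + 1) n := by
    rw [← ketBasis_apply, ← ketBasis_apply, ketBasis.adjoint_apply_of_weightedShift hshift
      (fun i => ((Real.sqrt (1 - q ^ (2 * (i.1 + 1))) * q ^ ((i.1 + 1) + 2 * i.2) : ℝ) : ℂ)),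
      Complex.conj_ofReal]
    · rintro ⟨m, n⟩
      rw [ketBasis_apply, ketBasis_apply, ha]
    · rintro ⟨_ | m, n⟩ hj
      · rw [ketBasis_apply, ha0]
      · exact absurd ⟨(m, n), rfl⟩ hj
  refine ketBasis.ext_continuousLinearMap ?_
  rintro ⟨m, n⟩
  simp only [ketBasis_apply, mul_apply_eq_comp, hb, hadj, map_smul, smul_smul]
  congr 1
  push_cast
  ring

open ContinuousLinearMap in
/-- In the representation σ: `a* b = b a*`. -/
theorem stmt16 (q : ℝ) (hq0 : 0 < q) (hq1 : q < 1)
    (a b : H2 →L[ℂ] H2)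
    (ha0 : ∀ n : ℕ, a (ket 0 n) = 0)
    (ha : ∀ m n : ℕ, a (ket (m + 1) n)
        = ((Real.sqrt (1 - q ^ (2 * (m + 1))) * q ^ ((m + 1) + 2 * n) : ℝ) : ℂ) • ket m n)
    (hb : ∀ m n : ℕ, b (ket m n)
        = ((Real.sqrt (1 - q ^ (4 * n + 4)) * q ^ (2 * (m + n + 2)) : ℝ) : ℂ) • ket m (n + 1)) :
    adjoint a * b = b * adjoint a :=
  stmt16_general q a b ha0 ha hb
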